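/- Let g and g' be two discrete-time Markov transition kernels on a σ-compact metric state space X with stationary distributions π and π' respectively, and let t_m, t_m' be their mixing times (with threshold 1/4). If sup_{x∈X} ‖g(x,1,·) − g'(x,1,·)‖ ≤ 1/(256 · t_m), then (1/4) t_m' ≤ t_m ≤ 4 t_m'. -/

import Mathlib

open MeasureTheory ENNReal

noncomputable section

namespace MixHit

variable {X : Type*} [MeasurableSpace X]

/-- Total variation distance between two Borel measures. -/
def tv (μ ν : Measure X) : ℝ≥0∞ :=
  ⨆ (A : Set X) (_ : MeasurableSet A), (μ A - ν A) ⊔ (ν A - μ A)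

/-- `g` is a Markov transition kernel: each `g x` is a (Borel) probability measure,
measurably in `x`. -/
def IsMarkov (g : X → Measure X) : Prop :=
  (∀ x, IsProbabilityMeasure (g x)) ∧
    ∀ A : Set X, MeasurableSet A → Measurable fun x => g x A

/-- `t`-step transition probabilities (`iterK g 0 x = δ_x`). -/
def iterK (g : X → Measure X) : ℕ → X → Measure X
  | 0 => fun x => Measure.dirac x
  | n + 1 => fun x => (g x).bind (iterK g n)

/-- `π` is a stationary distribution for `g`. -/
def Stationary (g : X → Measure X) (π : Measure X) : Prop :=
  ∀ A : Set X, MeasurableSet A → ∫⁻ x, g x A ∂π = π A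

/-- `g` is reversible with respect to `π`. -/
def Reversible (g : X → Measure X) (π : Measure X) : Prop :=
  ∀ A B : Set X, MeasurableSet A → MeasurableSet B →
    ∫⁻ x in A, g x B ∂π = ∫⁻ x in B, g x A ∂π

/-- The lazy kernel `g_L(x,·) = (1/2) g(x,·) + (1/2) δ_x`. -/
def lazy (g : X → Measure X) : X → Measure X := fun x =>
  (2 : ℝ≥0∞)⁻¹ • g x + (2 : ℝ≥0∞)⁻¹ • Measure.dirac x

/-- Mixing time `min {t : sup_x ‖g^t(x,·) − π‖ ≤ ε}`, as an element of `ℝ≥0∞`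
(`⊤` if there is no such `t`). -/
def mixTime (g : X → Measure X) (π : Measure X) (ε : ℝ≥0∞) : ℝ≥0∞ :=
  ⨅ (t : ℕ) (_ : ∀ x, tv (iterK g t x) π ≤ ε), (t : ℝ≥0∞)

/-- `d̄(t) = sup_{x,y} ‖g^t(x,·) − g^t(y,·)‖`. -/
def dbar (g : X → Measure X) (t : ℕ) : ℝ≥0∞ :=
  ⨆ (x : X) (y : X), tv (iterK g t x) (iterK g t y)

/-- Standardized mixing time `min {t : d̄(t) ≤ ε}` (`⊤` if there is no such `t`). -/
def stdMix (g : X → Measure X) (ε : ℝ≥0∞) : ℝ≥0∞ :=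
  ⨅ (t : ℕ) (_ : dbar g t ≤ ε), (t : ℝ≥0∞)

/-- `P_x(τ_A = t)` for the chain with kernel `g` started at `x`, where
`τ_A = min {t : X_t ∈ A}` (first-step recursion). -/
def hitEq (g : X → Measure X) (A : Set X) : ℕ → X → ℝ≥0∞
  | 0 => fun x => A.indicator (fun _ => 1) x
  | n + 1 => fun x => Aᶜ.indicator (fun x' => ∫⁻ y, hitEq g A n y ∂(g x')) x

/-- `P_x(τ_A ≤ t)`. -/
def hitLE (g : X → Measure X) (A : Set X) (t : ℕ) (x : X) : ℝ≥0∞ :=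
  ∑ s ∈ Finset.range (t + 1), hitEq g A s x

/-- `E_x[τ_A] = ∑_{t ≥ 0} P_x(τ_A > t)`. -/
def expHit (g : X → Measure X) (A : Set X) (x : X) : ℝ≥0∞ :=
  ∑' t : ℕ, (1 - hitLE g A t x)

/-- Maximum hitting time `t_H(α) = sup {E_x[τ_A] : x ∈ X, A Borel, π(A) ≥ α}`. -/
def maxHit (g : X → Measure X) (π : Measure X) (α : ℝ) : ℝ≥0∞ :=
  ⨆ (x : X) (A : Set X) (_ : MeasurableSet A) (_ : ENNReal.ofReal α ≤ π A),
    expHit g A x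

/-- Large hitting time
`τ_g(α) = min {t : inf {P_x(τ_A ≤ t) : x ∈ X, A Borel, π(A) ≥ α} > 0.9}`. -/
def largeHit (g : X → Measure X) (π : Measure X) (α : ℝ) : ℝ≥0∞ :=
  ⨅ (t : ℕ) (_ : (9 / 10 : ℝ≥0∞) <
      ⨅ (x : X) (A : Set X) (_ : MeasurableSet A) (_ : ENNReal.ofReal α ≤ π A),
        hitLE g A t x),
    (t : ℝ≥0∞)

/-- The strong Feller property: continuity of `x ↦ g(x,·)` in total variation. -/
def StrongFeller [PseudoMetricSpace X] (g : X → Measure X) : Prop :=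
  ∀ x : X, ∀ ε : ℝ, 0 < ε → ∃ δ : ℝ, 0 < δ ∧
    ∀ y : X, dist y x < δ → tv (g x) (g y) < ENNReal.ofReal ε

/-- Law of `X_t` on the event that `t` is the first time the chain lies in `S`. -/
def enterDist (g : X → Measure X) (S : Set X) : ℕ → X → Measure X
  | 0 => fun x => (Measure.dirac x).restrict S
  | n + 1 => fun x => Sᶜ.indicator (fun x' => (g x').bind (enterDist g S n)) x

/-- Law of the chain's position at its first entrance (at a time `≥ 0`) into `S`. -/
def hitMeasure (g : X → Measure X) (S : Set X) (x : X) : Measure X :=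
  Measure.sum fun t => enterDist g S t x

/-- One step of the trace of `g` on `S`: take one `g`-step, then run until the
first entrance into `S`. -/
def traceK (g : X → Measure X) (S : Set X) : X → Measure X :=
  fun x => (g x).bind (hitMeasure g S)

/-- The trace of `g` on `S`, viewed as a kernel on the subtype `S`. -/
def traceSub (g : X → Measure X) (S : Set X) : S → Measure S :=
  fun x => (traceK g S (x : X)).comap (Subtype.val)

/-- Normalization of `π` to `S`, as a measure on the subtype `S`. -/
def normSub (π : Measure X) (S : Set X) : Measure S :=
  (π S)⁻¹ • π.comap (Subtype.val : S → X)

/-- Ergodicity: from every starting point, the chain converges to `π`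
in total variation. -/
def ErgodicK (g : X → Measure X) (π : Measure X) : Prop :=
  Stationary g π ∧
    ∀ x : X, Filter.Tendsto (fun t => tv (iterK g t x) π) Filter.atTop (nhds 0)

/-!
Changing every transition by at most `ε` in total variation changes the `t`-step laws by at most
`t ε`. So if `g'` is `1/4`-mixed at time `m` and `m ε ≤ 1/256`, every `g^m(x, ·)` lies within
`1/4 + 1/256` of `π'`, whence `d̄(m) ≤ 65/128` for `g`. Since `d̄` is submultiplicative and dominates
the distance to `π`, `g` is mixed at time `4m`, as `(65/128)^4 < 1/4`. The hypothesis gives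
`m ε ≤ 1/256` for every `m ≤ t_m`: take `m = t_m` with the roles of `g, g'` exchanged for the first
inequality, and `m = t_m'` for the second, which is trivial when `t_m < t_m'`.
-/

theorem tv_comm (μ ν : Measure X) : tv μ ν = tv ν μ := by
  simp only [tv, sup_comm]

theorem sub_le_tv (μ ν : Measure X) {A : Set X} (hA : MeasurableSet A) :
    μ A - ν A ≤ tv μ ν :=
  le_iSup₂_of_le A hA le_sup_left

theorem le_add_tv (μ ν : Measure X) {A : Set X} (hA : MeasurableSet A) :
    μ A ≤ ν A + tv μ ν :=
  tsub_le_iff_left.mp (sub_le_tv μ ν hA)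

theorem tv_le_of_forall_le_add {μ ν : Measure X} {c : ℝ≥0∞}
    (h : ∀ A, MeasurableSet A → μ A ≤ ν A + c) (h' : ∀ A, MeasurableSet A → ν A ≤ μ A + c) :
    tv μ ν ≤ c :=
  iSup₂_le fun A hA => sup_le (tsub_le_iff_left.mpr (h A hA)) (tsub_le_iff_left.mpr (h' A hA))

theorem tv_self (μ : Measure X) : tv μ μ = 0 :=
  nonpos_iff_eq_zero.mp (tv_le_of_forall_le_add (fun _ _ => by simp) fun _ _ => by simp)

theorem tv_triangle (μ ν ρ : Measure X) : tv μ ρ ≤ tv μ ν + tv ν ρ := by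
  refine tv_le_of_forall_le_add (fun A hA => ?_) fun A hA => ?_
  · calc μ A ≤ ν A + tv μ ν := le_add_tv μ ν hA
      _ ≤ ρ A + tv ν ρ + tv μ ν := by gcongr; exact le_add_tv ν ρ hA
      _ = ρ A + (tv μ ν + tv ν ρ) := by ring
  · calc ρ A ≤ ν A + tv ν ρ := by rw [tv_comm]; exact le_add_tv ρ ν hA
      _ ≤ μ A + tv μ ν + tv ν ρ := by gcongr; rw [tv_comm]; exact le_add_tv ν μ hA
      _ = μ A + (tv μ ν + tv ν ρ) := by ring

theorem tv_le_one (μ ν : Measure X) [IsProbabilityMeasure μ] [IsProbabilityMeasure ν] :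
    tv μ ν ≤ 1 :=
  tv_le_of_forall_le_add (fun _ _ => le_add_left prob_le_one) fun _ _ => le_add_left prob_le_one

theorem iSup_tv_comm {ι : Type*} (μ ν : ι → Measure X) :
    ⨆ i, tv (μ i) (ν i) = ⨆ i, tv (ν i) (μ i) := by
  simp only [tv_comm]

/-- The common part `ρ` is `ν` on the positive set of a Hahn decomposition of `μ - ν` and `μ` on
its complement. -/
theorem exists_eq_add_add_of_measure_univ_eq {μ ν : Measure X} [IsFiniteMeasure μ]
    [IsFiniteMeasure ν] (huniv : μ Set.univ = ν Set.univ) :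
    ∃ ρ μ₁ ν₁ : Measure X, μ = ρ + μ₁ ∧ ν = ρ + ν₁ ∧ μ₁ Set.univ = ν₁ Set.univ ∧
      μ₁ Set.univ ≤ tv μ ν := by
  obtain ⟨s, hs, hνμ, hμν⟩ := hahn_decomposition μ ν
  have hle : ν.restrict s ≤ μ.restrict s := Measure.le_iff.mpr fun t ht => by
    simpa only [Measure.restrict_apply ht] using hνμ _ (ht.inter hs) Set.inter_subset_right
  have hle' : μ.restrict sᶜ ≤ ν.restrict sᶜ := Measure.le_iff.mpr fun t ht => by
    simpa only [Measure.restrict_apply ht] using hμν _ (ht.inter hs.compl) Set.inter_subset_right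
  have hμ : μ = ν.restrict s + μ.restrict sᶜ + (μ.restrict s - ν.restrict s) := by
    conv_lhs => rw [← Measure.restrict_add_restrict_compl (μ := μ) hs,
      ← Measure.sub_add_cancel_of_le hle]
    ac_rfl
  have hν : ν = ν.restrict s + μ.restrict sᶜ + (ν.restrict sᶜ - μ.restrict sᶜ) := by
    conv_lhs => rw [← Measure.restrict_add_restrict_compl (μ := ν) hs,
      ← Measure.sub_add_cancel_of_le hle']
    ac_rfl
  refine ⟨_, _, _, hμ, hν, ?_, ?_⟩
  · refine (ENNReal.add_right_inj (measure_ne_top (ν.restrict s + μ.restrict sᶜ) Set.univ)).mp ?_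
    rw [← Measure.add_apply, ← Measure.add_apply, ← hμ, ← hν, huniv]
  · rw [Measure.sub_apply MeasurableSet.univ hle, Measure.restrict_apply_univ,
      Measure.restrict_apply_univ]
    exact sub_le_tv μ ν hs

/-- Integrate `f x ≤ f y + D` in `x` against `μ₁` and in `y` against `ν₁`, then cancel the common
mass. -/
theorem lintegral_le_lintegral_add_mul_of_forall_le_add {μ₁ ν₁ : Measure X}
    (hfin : μ₁ Set.univ ≠ ⊤) (hmass : μ₁ Set.univ = ν₁ Set.univ) {f : X → ℝ≥0∞} {D : ℝ≥0∞}
    (hf : ∀ x y, f x ≤ f y + D) :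
    ∫⁻ x, f x ∂μ₁ ≤ ∫⁻ x, f x ∂ν₁ + μ₁ Set.univ * D := by
  set c := μ₁ Set.univ
  rcases eq_or_ne c 0 with hc | hc
  · simp [Measure.measure_univ_eq_zero.mp hc]
  refine (ENNReal.mul_le_mul_iff_right hc hfin).mp ?_
  calc c * ∫⁻ x, f x ∂μ₁ = ∫⁻ _, ∫⁻ x, f x ∂μ₁ ∂ν₁ := by rw [lintegral_const, hmass, mul_comm]
    _ ≤ ∫⁻ y, c * (f y + D) ∂ν₁ := lintegral_mono fun y =>
        (lintegral_mono (hf · y)).trans_eq (by rw [lintegral_const, mul_comm])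
    _ = c * (∫⁻ x, f x ∂ν₁ + c * D) := by
        rw [lintegral_const_mul' _ _ hfin, lintegral_add_right _ measurable_const,
          lintegral_const, hmass, mul_comm D]

theorem lintegral_le_lintegral_add_tv_mul {μ ν : Measure X} [IsProbabilityMeasure μ]
    [IsProbabilityMeasure ν] {f : X → ℝ≥0∞} {D : ℝ≥0∞} (hf : ∀ x y, f x ≤ f y + D) :
    ∫⁻ x, f x ∂μ ≤ ∫⁻ x, f x ∂ν + tv μ ν * D := by
  obtain ⟨ρ, μ₁, ν₁, hμ, hν, hmass, htv⟩ :=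
    exists_eq_add_add_of_measure_univ_eq (μ := μ) (ν := ν) (by simp)
  have hfin : μ₁ Set.univ ≠ ⊤ := ne_top_of_le_ne_top one_ne_top (htv.trans (tv_le_one μ ν))
  calc ∫⁻ x, f x ∂μ = ∫⁻ x, f x ∂ρ + ∫⁻ x, f x ∂μ₁ := by rw [hμ, lintegral_add_measure]
    _ ≤ ∫⁻ x, f x ∂ρ + (∫⁻ x, f x ∂ν₁ + tv μ ν * D) := by
        gcongr
        exact (lintegral_le_lintegral_add_mul_of_forall_le_add hfin hmass hf).trans (by gcongr)
    _ = ∫⁻ x, f x ∂ν + tv μ ν * D := by rw [← add_assoc, ← lintegral_add_measure, ← hν]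

section Bind

variable {K K' : X → Measure X}

theorem bind_apply_le_add_tv_mul (hK : Measurable K) (μ ν : Measure X) [IsProbabilityMeasure μ]
    [IsProbabilityMeasure ν] {A : Set X} (hA : MeasurableSet A) :
    μ.bind K A ≤ ν.bind K A + tv μ ν * ⨆ (x) (y), tv (K x) (K y) := by
  simp only [Measure.bind_apply hA hK.aemeasurable]
  exact lintegral_le_lintegral_add_tv_mul fun x y => (le_add_tv _ _ hA).trans
    (by gcongr; exact le_iSup₂ (f := fun x y => tv (K x) (K y)) x y)

theorem tv_bind_le_mul (hK : Measurable K) (μ ν : Measure X) [IsProbabilityMeasure μ]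
    [IsProbabilityMeasure ν] :
    tv (μ.bind K) (ν.bind K) ≤ tv μ ν * ⨆ (x) (y), tv (K x) (K y) :=
  tv_le_of_forall_le_add (fun _ hA => bind_apply_le_add_tv_mul hK μ ν hA)
    fun _ hA => tv_comm μ ν ▸ bind_apply_le_add_tv_mul hK ν μ hA

theorem tv_bind_le (hK : Measurable K) (hKp : ∀ x, IsProbabilityMeasure (K x))
    (μ ν : Measure X) [IsProbabilityMeasure μ] [IsProbabilityMeasure ν] :
    tv (μ.bind K) (ν.bind K) ≤ tv μ ν :=
  (tv_bind_le_mul hK μ ν).trans (mul_le_of_le_one_right' (iSup₂_le fun _ _ => tv_le_one _ _))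

theorem bind_apply_le_add_iSup_tv (hK : Measurable K) (hK' : Measurable K') (μ : Measure X)
    [IsProbabilityMeasure μ] {A : Set X} (hA : MeasurableSet A) :
    μ.bind K A ≤ μ.bind K' A + ⨆ x, tv (K x) (K' x) := by
  rw [Measure.bind_apply hA hK.aemeasurable, Measure.bind_apply hA hK'.aemeasurable]
  calc ∫⁻ x, K x A ∂μ ≤ ∫⁻ x, (K' x A + ⨆ x, tv (K x) (K' x)) ∂μ := lintegral_mono fun x =>
        (le_add_tv _ _ hA).trans (by gcongr; exact le_iSup (fun x => tv (K x) (K' x)) x)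
    _ = ∫⁻ x, K' x A ∂μ + ⨆ x, tv (K x) (K' x) := by
        rw [lintegral_add_right _ measurable_const, lintegral_const, measure_univ, mul_one]

theorem tv_bind_le_iSup_tv (hK : Measurable K) (hK' : Measurable K') (μ : Measure X)
    [IsProbabilityMeasure μ] :
    tv (μ.bind K) (μ.bind K') ≤ ⨆ x, tv (K x) (K' x) :=
  tv_le_of_forall_le_add (fun _ hA => bind_apply_le_add_iSup_tv hK hK' μ hA)
    fun _ hA => iSup_tv_comm K' K ▸ bind_apply_le_add_iSup_tv hK' hK μ hA

end Bind

section Markov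

variable {g : X → Measure X}

theorem IsMarkov.measurable (hg : IsMarkov g) : Measurable g :=
  Measure.measurable_of_measurable_coe g hg.2

theorem measurable_iterK (hg : Measurable g) (n : ℕ) : Measurable (iterK g n) := by
  induction n with
  | zero => exact Measure.measurable_dirac
  | succ n ih => exact (Measure.measurable_bind' ih).comp hg

theorem isProbabilityMeasure_iterK (hg : IsMarkov g) (n : ℕ) (x : X) :
    IsProbabilityMeasure (iterK g n x) := by
  induction n generalizing x with
  | zero => exact Measure.dirac.isProbabilityMeasure
  | succ n ih =>
    have := hg.1 x
    exact isProbabilityMeasure_bind (measurable_iterK hg.measurable n).aemeasurable (ae_of_all _ ih)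

theorem iterK_add (hg : Measurable g) (s t : ℕ) (x : X) :
    iterK g (s + t) x = (iterK g s x).bind (iterK g t) := by
  induction s generalizing x with
  | zero => rw [Nat.zero_add]; exact (Measure.dirac_bind (measurable_iterK hg t) x).symm
  | succ s ih =>
    rw [Nat.add_right_comm]
    change (g x).bind (iterK g (s + t)) = ((g x).bind (iterK g s)).bind (iterK g t)
    rw [Measure.bind_bind (measurable_iterK hg s).aemeasurable (measurable_iterK hg t).aemeasurable]
    exact congrArg _ (funext ih)

theorem Stationary.bind_iterK {π : Measure X} (hπ : Stationary g π) (hg : Measurable g) (s : ℕ) :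
    π.bind (iterK g s) = π := by
  induction s with
  | zero => exact Measure.bind_dirac
  | succ s ih =>
    have hbind : π.bind g = π := Measure.ext fun A hA => by
      rw [Measure.bind_apply hA hg.aemeasurable]; exact hπ A hA
    calc π.bind (iterK g (s + 1)) = (π.bind g).bind (iterK g s) :=
          (Measure.bind_bind hg.aemeasurable (measurable_iterK hg s).aemeasurable).symm
      _ = π := by rw [hbind, ih]

theorem tv_iterK_le_dbar (hg : Measurable g) {π : Measure X} [IsProbabilityMeasure π]
    (hπ : Stationary g π) (s : ℕ) (x : X) : tv (iterK g s x) π ≤ dbar g s :=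
  calc tv (iterK g s x) π = tv (π.bind fun _ => iterK g s x) (π.bind (iterK g s)) := by
        rw [Measure.bind_const, measure_univ, one_smul, hπ.bind_iterK hg]
    _ ≤ ⨆ y, tv (iterK g s x) (iterK g s y) :=
        tv_bind_le_iSup_tv measurable_const (measurable_iterK hg s) π
    _ ≤ dbar g s := le_iSup (fun x => ⨆ y, tv (iterK g s x) (iterK g s y)) x

theorem dbar_add_le_mul (hg : IsMarkov g) (s t : ℕ) : dbar g (s + t) ≤ dbar g s * dbar g t := by
  refine iSup₂_le fun x y => ?_
  have := isProbabilityMeasure_iterK hg s x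
  have := isProbabilityMeasure_iterK hg s y
  rw [iterK_add hg.measurable s t x, iterK_add hg.measurable s t y]
  exact (tv_bind_le_mul (measurable_iterK hg.measurable t) _ _).trans
    (mul_le_mul' (le_iSup₂ (f := fun x y => tv (iterK g s x) (iterK g s y)) x y) le_rfl)

theorem dbar_mul_le_pow (hg : IsMarkov g) (m k : ℕ) : dbar g (k * m) ≤ dbar g m ^ k := by
  induction k with
  | zero =>
    rw [zero_mul, pow_zero]
    refine iSup₂_le fun x y => ?_
    have := isProbabilityMeasure_iterK hg 0 x
    have := isProbabilityMeasure_iterK hg 0 y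
    exact tv_le_one _ _
  | succ k ih =>
    rw [Nat.succ_mul, pow_succ]
    exact (dbar_add_le_mul hg _ _).trans (by gcongr)

theorem dbar_le_two_mul {m : ℕ} {ρ : Measure X} {δ : ℝ≥0∞}
    (h : ∀ x, tv (iterK g m x) ρ ≤ δ) : dbar g m ≤ 2 * δ :=
  iSup₂_le fun x y => (tv_triangle _ ρ _).trans
    (by rw [two_mul, tv_comm ρ]; exact add_le_add (h x) (h y))

theorem tv_iterK_le_mul_iSup_tv {g' : X → Measure X} (hg : IsMarkov g) (hg' : IsMarkov g')
    (s : ℕ) (x : X) :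
    tv (iterK g s x) (iterK g' s x) ≤ s * ⨆ z, tv (g z) (g' z) := by
  induction s generalizing x with
  | zero => simp [iterK, tv_self]
  | succ s ih =>
    have := hg.1 x
    have := hg'.1 x
    set ε := ⨆ z, tv (g z) (g' z)
    calc tv (iterK g (s + 1) x) (iterK g' (s + 1) x)
        ≤ tv ((g x).bind (iterK g s)) ((g x).bind (iterK g' s)) +
          tv ((g x).bind (iterK g' s)) ((g' x).bind (iterK g' s)) := tv_triangle _ _ _
      _ ≤ s * ε + ε := add_le_add
          ((tv_bind_le_iSup_tv (measurable_iterK hg.measurable s)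
            (measurable_iterK hg'.measurable s) _).trans (iSup_le ih))
          ((tv_bind_le (measurable_iterK hg'.measurable s) (isProbabilityMeasure_iterK hg' s) _ _).trans
            (le_iSup (fun z => tv (g z) (g' z)) x))
      _ = (s + 1 : ℕ) * ε := by push_cast; ring

end Markov

section MixingTime

variable {g : X → Measure X} {π : Measure X} {ε : ℝ≥0∞}

theorem mixTime_le {t : ℕ} (h : ∀ x, tv (iterK g t x) π ≤ ε) : mixTime g π ε ≤ t :=
  iInf₂_le t h

theorem exists_mixTime_eq_of_ne_top (h : mixTime g π ε ≠ ⊤) :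
    ∃ t : ℕ, (∀ x, tv (iterK g t x) π ≤ ε) ∧ mixTime g π ε = t := by
  classical
  have hex : ∃ t : ℕ, ∀ x, tv (iterK g t x) π ≤ ε := by
    by_contra hnone
    exact h (iInf₂_eq_top.mpr fun t ht => (hnone ⟨t, ht⟩).elim)
  exact ⟨Nat.find hex, Nat.find_spec hex, le_antisymm (mixTime_le (Nat.find_spec hex))
    (le_iInf₂ fun t ht => Nat.cast_le.mpr (Nat.find_min' hex ht))⟩

theorem mul_le_inv_of_le_of_le_inv_mul {a b c d : ℝ≥0∞} (hc₀ : c ≠ 0) (hc : c ≠ ⊤) (hab : a ≤ b)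
    (hd : d ≤ (c * b)⁻¹) : a * d ≤ c⁻¹ :=
  calc a * d ≤ b * (c * b)⁻¹ := mul_le_mul' hab hd
    _ = c⁻¹ * (b * b⁻¹) := by rw [ENNReal.mul_inv (Or.inl hc₀) (Or.inl hc)]; ring
    _ ≤ c⁻¹ := mul_le_of_le_one_right' (ENNReal.mul_inv_le_one b)

theorem mixTime_le_four_mul {g' : X → Measure X} {ρ : Measure X} [IsProbabilityMeasure π]
    (hg : IsMarkov g) (hg' : IsMarkov g') (hπ : Stationary g π) {m : ℕ}
    (hm : ∀ x, tv (iterK g' m x) ρ ≤ 1 / 4) (hε : m * ⨆ x, tv (g x) (g' x) ≤ 1 / 256) :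
    mixTime g π (1 / 4) ≤ 4 * m := by
  have hnear : ∀ x, tv (iterK g m x) ρ ≤ 1 / 4 + 1 / 256 := fun x =>
    calc tv (iterK g m x) ρ ≤ tv (iterK g m x) (iterK g' m x) + tv (iterK g' m x) ρ :=
          tv_triangle _ _ _
      _ ≤ 1 / 256 + 1 / 4 := add_le_add ((tv_iterK_le_mul_iSup_tv hg hg' m x).trans hε) (hm x)
      _ = 1 / 4 + 1 / 256 := add_comm _ _
  have hnum : (2 * (1 / 4 + 1 / 256) : ℝ≥0∞) ^ 4 ≤ 1 / 4 := by
    rw [← ENNReal.toReal_le_toReal (by finiteness) (by finiteness)]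
    simp [ENNReal.toReal_add]
    norm_num
  calc mixTime g π (1 / 4) ≤ (4 * m : ℕ) := mixTime_le fun x =>
        (tv_iterK_le_dbar hg.measurable hπ _ x).trans <| (dbar_mul_le_pow hg m 4).trans <|
          (pow_le_pow_left' (dbar_le_two_mul hnear) 4).trans hnum
    _ = 4 * m := by push_cast; rfl

end MixingTime

theorem stmt16_general {X : Type*} [MeasurableSpace X] (g g' : X → Measure X) (π π' : Measure X)
    (hg : IsMarkov g) (hg' : IsMarkov g')
    (hπ : IsProbabilityMeasure π) (hπ' : IsProbabilityMeasure π')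
    (hstat : Stationary g π) (hstat' : Stationary g' π')
    (hclose : (⨆ x, tv (g x) (g' x)) ≤ (256 * mixTime g π (1 / 4))⁻¹) :
    (1 / 4 : ℝ≥0∞) * mixTime g' π' (1 / 4) ≤ mixTime g π (1 / 4) ∧
      mixTime g π (1 / 4) ≤ 4 * mixTime g' π' (1 / 4) := by
  have hsmall : ∀ m : ℕ, (m : ℝ≥0∞) ≤ mixTime g π (1 / 4) →
      m * ⨆ x, tv (g x) (g' x) ≤ 1 / 256 := fun m hm => by
    rw [one_div]; exact mul_le_inv_of_le_of_le_inv_mul (by norm_num) (by norm_num) hm hclose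
  constructor
  · rcases eq_or_ne (mixTime g π (1 / 4)) ⊤ with hT | hT
    · rw [hT]; exact le_top
    obtain ⟨n, hn, hTn⟩ := exists_mixTime_eq_of_ne_top hT
    have hT' := mixTime_le_four_mul hg' hg hstat' hn (iSup_tv_comm g g' ▸ hsmall n hTn.ge)
    calc (1 / 4 : ℝ≥0∞) * mixTime g' π' (1 / 4) ≤ 1 / 4 * (4 * n) := by gcongr
      _ = mixTime g π (1 / 4) := by
        rw [hTn, ← mul_assoc, one_div, ENNReal.inv_mul_cancel (by norm_num) (by norm_num), one_mul]
  · rcases eq_or_ne (mixTime g' π' (1 / 4)) ⊤ with hT' | hT'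
    · rw [hT', ENNReal.mul_top (by norm_num)]; exact le_top
    obtain ⟨m, hm, hTm⟩ := exists_mixTime_eq_of_ne_top hT'
    rw [hTm]
    rcases le_or_gt (m : ℝ≥0∞) (mixTime g π (1 / 4)) with hmT | hTm
    · exact mixTime_le_four_mul hg hg' hstat hm (hsmall m hmT)
    · exact hTm.le.trans (le_mul_of_one_le_left' (by norm_num))

/-- perturbation bound on mixing times. -/
theorem stmt16 {X : Type*} [MetricSpace X] [MeasurableSpace X] [BorelSpace X]
    [SigmaCompactSpace X] (g g' : X → Measure X) (π π' : Measure X)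
    (hg : IsMarkov g) (hg' : IsMarkov g')
    (hπ : IsProbabilityMeasure π) (hπ' : IsProbabilityMeasure π')
    (hstat : Stationary g π) (hstat' : Stationary g' π')
    (hclose : (⨆ x, tv (g x) (g' x)) ≤ (256 * mixTime g π (1 / 4))⁻¹) :
    (1 / 4 : ℝ≥0∞) * mixTime g' π' (1 / 4) ≤ mixTime g π (1 / 4) ∧
      mixTime g π (1 / 4) ≤ 4 * mixTime g' π' (1 / 4) :=
  stmt16_general g g' π π' hg hg' hπ hπ' hstat hstat' hclose

end MixHit
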